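/- arXiv:0712.2308 — 3 statements merged into one kernel-verified Lean document; each statement's English description precedes it below -/
import Mathlib

section
/- Let J ⊂ I be monomial ideals of S = K[x_1,…,x_n] and g ∈ ℕ^n with a ≤ g for all a with x^a ∈ I \ J. Let 𝒫 : P^g_{I/J} = ⋃_{i=1}^r [c_i,d_i] be a partition of the characteristic poset into intervals such that for every j the union ⋃_{i=1}^j [c_i,d_i] is a poset ideal of P^g_{I/J}. Then the associated Stanley decomposition D(𝒫) of I/J is induced by a prime filtration; equivalently, the Stanley spaces of D(𝒫) can be ordered so that every partial sum of the decomposition is a ℤ^n-graded S-submodule of I/J. -/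
open MvPolynomial

namespace StanleyPaper

variable {n : ℕ} {K : Type} [Field K]

/-- A monomial ideal: an ideal generated by monomials. -/
def IsMonomialIdeal (I : Ideal (MvPolynomial (Fin n) K)) : Prop :=
  ∃ A : Set (Fin n →₀ ℕ),
    I = Ideal.span ((fun a => (monomial a (1 : K) : MvPolynomial (Fin n) K)) '' A)

/-- The set of exponent vectors `a` with `x^a ∈ I \ J`. -/
def expSet (I J : Ideal (MvPolynomial (Fin n) K)) : Set (Fin n →₀ ℕ) :=
  {a | (monomial a (1 : K) : MvPolynomial (Fin n) K) ∈ I ∧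
    (monomial a (1 : K) : MvPolynomial (Fin n) K) ∉ J}

/-- The characteristic poset `P^g_{I/J}` of `I/J` with respect to `g`. -/
def charPoset (I J : Ideal (MvPolynomial (Fin n) K)) (g : Fin n →₀ ℕ) : Set (Fin n →₀ ℕ) :=
  {a | a ∈ expSet I J ∧ a ≤ g}

/-- `Z_b = { x_j : b(j) = g(j) }`. -/
def Zset (g b : Fin n →₀ ℕ) : Finset (Fin n) :=
  Finset.univ.filter fun j => b j = g j

/-- `ρ(b) = |Z_b|`. -/
def rho (g b : Fin n →₀ ℕ) : ℕ := (Zset g b).card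

/-- The Stanley space `x^c K[Z]`, as a `K`-subspace of `S = K[x_1,…,x_n]`. -/
noncomputable def stanleySpace (K : Type) [Field K] (c : Fin n →₀ ℕ) (Z : Finset (Fin n)) :
    Submodule K (MvPolynomial (Fin n) K) :=
  Submodule.span K
    ((fun a => (monomial a (1 : K) : MvPolynomial (Fin n) K)) ''
      {a | c ≤ a ∧ ∀ j ∉ Z, a j = c j})

/-- The `K`-span of the monomials of `I \ J`; this is the standard model for the
`ℤⁿ`-graded `K`-vector space `I/J`. -/
noncomputable def quotSpace (I J : Ideal (MvPolynomial (Fin n) K)) : Submodule K (MvPolynomial (Fin n) K) :=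
  Submodule.span K ((fun a => (monomial a (1 : K) : MvPolynomial (Fin n) K)) '' expSet I J)

/-- The `K`-span of the monomials of `J`. -/
noncomputable def Jspan (J : Ideal (MvPolynomial (Fin n) K)) : Submodule K (MvPolynomial (Fin n) K) :=
  Submodule.span K ((fun a => (monomial a (1 : K) : MvPolynomial (Fin n) K)) ''
    {a | (monomial a (1 : K) : MvPolynomial (Fin n) K) ∈ J})

/-- A (graded) `K`-subspace `W` of the model of `I/J` corresponds to an (`ℤⁿ`-graded)
`S`-submodule of `I/J` iff it is stable under multiplication by the variables, modulo `J`. -/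
def IsSSubmoduleModJ (J : Ideal (MvPolynomial (Fin n) K))
    (W : Submodule K (MvPolynomial (Fin n) K)) : Prop :=
  ∀ j : Fin n, ∀ p ∈ W, (X j : MvPolynomial (Fin n) K) * p ∈ W ⊔ Jspan J

/-- A partition of a (finite) subposet `P` of `ℕⁿ` into intervals `[c i, d i]`. -/
structure IntervalPartition (P : Set (Fin n →₀ ℕ)) where
  r : ℕ
  c : Fin r → (Fin n →₀ ℕ)
  d : Fin r → (Fin n →₀ ℕ)
  le : ∀ i, c i ≤ d i
  mem_c : ∀ i, c i ∈ P
  mem_d : ∀ i, d i ∈ P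
  sub : ∀ i, Set.Icc (c i) (d i) ⊆ P
  cover : ∀ a ∈ P, ∃ i, a ∈ Set.Icc (c i) (d i)
  disj : ∀ i j, i ≠ j → Disjoint (Set.Icc (c i) (d i)) (Set.Icc (c j) (d j))

/-- The inner index set of the `i`-th interval: all `c' ∈ [c i, d i]` with
`c'(j) = c i (j)` for all `j` with `x_j ∈ Z_{d i}`. -/
def IntervalPartition.innerSet {P : Set (Fin n →₀ ℕ)} (Pt : IntervalPartition P)
    (g : Fin n →₀ ℕ) (i : Fin Pt.r) : Set (Fin n →₀ ℕ) :=
  {c' | c' ∈ Set.Icc (Pt.c i) (Pt.d i) ∧ ∀ j ∈ Zset g (Pt.d i), c' j = Pt.c i j}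

/-- The index set of the Stanley decomposition `D(Pt)` associated to a partition `Pt`. -/
def IntervalPartition.DPIdx {P : Set (Fin n →₀ ℕ)} (Pt : IntervalPartition P)
    (g : Fin n →₀ ℕ) : Type :=
  Σ i : Fin Pt.r, Pt.innerSet g i

/-- The family of Stanley spaces of the decomposition `D(Pt)`:
the summand at `(i, c')` is `x^{c'} K[Z_{d i}]`. -/
noncomputable def IntervalPartition.DPfam (K : Type) [Field K] {P : Set (Fin n →₀ ℕ)}
    (Pt : IntervalPartition P) (g : Fin n →₀ ℕ) (x : Pt.DPIdx g) :
    Submodule K (MvPolynomial (Fin n) K) :=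
  stanleySpace K (x.2 : Fin n →₀ ℕ) (Zset g (Pt.d x.1))

/-- `sdepth D(Pt) = min { ρ(d i) }`. -/
noncomputable def IntervalPartition.sdepthDP {P : Set (Fin n →₀ ℕ)} (Pt : IntervalPartition P)
    (g : Fin n →₀ ℕ) : ℕ :=
  sInf {k | ∃ i : Fin Pt.r, k = rho g (Pt.d i)}

/-- The property that the partial unions `⋃_{i < t} [c i, d i]` are poset ideals
of the characteristic poset, for all `t`. -/
def IntervalPartition.InitialsArePosetIdeals {P : Set (Fin n →₀ ℕ)}
    (Pt : IntervalPartition P) : Prop :=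
  ∀ t : ℕ, ∀ a b : Fin n →₀ ℕ,
    (∃ i : Fin Pt.r, (i : ℕ) < t ∧ a ∈ Set.Icc (Pt.c i) (Pt.d i)) → b ∈ P → b ≤ a →
      ∃ i : Fin Pt.r, (i : ℕ) < t ∧ b ∈ Set.Icc (Pt.c i) (Pt.d i)

/-- The family `(x^{u i} K[Z i])_{i : ι}` is a Stanley decomposition of `I/J`:
each Stanley space is a free `K[Z i]`-module (its natural monomial basis is
`K`-linearly independent), the spaces are independent, and they sum to `I/J`. -/
def IsStanleyDecompOf (I J : Ideal (MvPolynomial (Fin n) K)) {ι : Type}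
    (u : ι → (Fin n →₀ ℕ)) (Z : ι → Finset (Fin n)) : Prop :=
  (∀ i, LinearIndependent K fun e : {e : Fin n →₀ ℕ // ∀ j ∉ Z i, e j = 0} =>
    (monomial (u i + (e : Fin n →₀ ℕ)) (1 : K) : MvPolynomial (Fin n) K)) ∧
  iSupIndep (fun i => stanleySpace K (u i) (Z i)) ∧
  (⨆ i, stanleySpace K (u i) (Z i)) = quotSpace I J

/-- A (finite) Stanley decomposition of `I/J`. -/
structure StanleyDec (I J : Ideal (MvPolynomial (Fin n) K)) where
  m : ℕ
  u : Fin m → (Fin n →₀ ℕ)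
  Z : Fin m → Finset (Fin n)
  isDecomp : IsStanleyDecompOf I J u Z

/-- The Stanley depth of a Stanley decomposition: `min |Z i|`. -/
noncomputable def StanleyDec.sdepth {I J : Ideal (MvPolynomial (Fin n) K)} (D : StanleyDec I J) : ℕ :=
  sInf {k | ∃ i, k = (D.Z i).card}

/-- The Stanley depth of `I/J`. -/
noncomputable def sdepthQ (I J : Ideal (MvPolynomial (Fin n) K)) : ℕ :=
  sSup {k | ∃ D : StanleyDec I J, k = D.sdepth}

/-- A Stanley decomposition of `I/J` is induced by a prime filtration iff its Stanley
spaces can be ordered so that all partial sums are (`ℤⁿ`-graded) `S`-submodules of `I/J`. -/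
def StanleyDec.InducedByPrimeFiltration {I J : Ideal (MvPolynomial (Fin n) K)}
    (D : StanleyDec I J) : Prop :=
  ∃ σ : Equiv.Perm (Fin D.m), ∀ t : ℕ,
    IsSSubmoduleModJ J
      (⨆ i : Fin D.m, ⨆ _ : (σ i : ℕ) < t, stanleySpace K (D.u i) (D.Z i))

/-- `D(Pt)` is induced by a prime filtration: its Stanley spaces can be ordered so that
all partial sums are (`ℤⁿ`-graded) `S`-submodules of `I/J`. -/
def IntervalPartition.DPInducedByPrimeFiltration (J : Ideal (MvPolynomial (Fin n) K))
    {P : Set (Fin n →₀ ℕ)} (Pt : IntervalPartition P) (g : Fin n →₀ ℕ) : Prop :=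
  ∃ (N : ℕ) (e : Fin N → Pt.DPIdx g), Function.Bijective e ∧ ∀ t : ℕ,
    IsSSubmoduleModJ J (⨆ s : Fin N, ⨆ _ : (s : ℕ) < t, Pt.DPfam K g (e s))

/-- A monomial prime ideal: an ideal generated by a subset of the variables. -/
def IsMonomialPrime (P : Ideal (MvPolynomial (Fin n) K)) : Prop :=
  ∃ V : Finset (Fin n), P = Ideal.span ((fun j => (X j : MvPolynomial (Fin n) K)) '' ↑V)

/-- A prime filtration of `I/J` (in the monomial model): a chain
`0 = W 0 ⊂ W 1 ⊂ ⋯ ⊂ W m = I/J` of `ℤⁿ`-graded `S`-submodules of `I/J` such that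
`W (i+1) / W i ≅ (S/P i)(-a i)` with `P i` a monomial prime ideal. -/
structure QPrimeFiltration (I J : Ideal (MvPolynomial (Fin n) K)) where
  m : ℕ
  W : Fin (m + 1) → Submodule K (MvPolynomial (Fin n) K)
  a : Fin m → (Fin n →₀ ℕ)
  P : Fin m → Ideal (MvPolynomial (Fin n) K)
  bot : W 0 = ⊥
  top : W (Fin.last m) = quotSpace I J
  graded : ∀ i, ∃ E : Set (Fin n →₀ ℕ),
    W i = Submodule.span K ((fun a => (monomial a (1 : K) : MvPolynomial (Fin n) K)) '' E)
  stable : ∀ i, IsSSubmoduleModJ J (W i)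
  amem : ∀ i, a i ∈ expSet I J
  gen : ∀ i, W i.succ = W i.castSucc ⊔
    Submodule.span K ((fun e => (monomial e (1 : K) : MvPolynomial (Fin n) K)) ''
      {e | a i ≤ e ∧ (monomial e (1 : K) : MvPolynomial (Fin n) K) ∉ J})
  ann : ∀ i, ∀ s : MvPolynomial (Fin n) K,
    s * monomial (a i) (1 : K) ∈ W i.castSucc ⊔ Jspan J ↔ s ∈ P i
  isPrime : ∀ i, IsMonomialPrime (P i)

/-- `fdepth ℱ = min { dim S/P : P ∈ supp ℱ }`. -/
noncomputable def QPrimeFiltration.fdepth {I J : Ideal (MvPolynomial (Fin n) K)}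
    (F : QPrimeFiltration I J) : WithBot ℕ∞ :=
  ⨅ i : Fin F.m, ringKrullDim (MvPolynomial (Fin n) K ⧸ F.P i)

/-- `fdepth I/J = max { fdepth ℱ : ℱ a prime filtration of I/J }`. -/
noncomputable def fdepthQ (I J : Ideal (MvPolynomial (Fin n) K)) : WithBot ℕ∞ :=
  ⨆ F : QPrimeFiltration I J, F.fdepth

/-- The graded maximal ideal `(x_1, …, x_n)`. -/
noncomputable def maxIdeal (n : ℕ) (K : Type) [Field K] : Ideal (MvPolynomial (Fin n) K) :=
  Ideal.span (Set.range (X : Fin n → MvPolynomial (Fin n) K))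

/-- The depth of a module over `S = K[x_1,…,x_n]` with respect to the graded maximal
ideal: the maximal length of an `M`-regular sequence of elements of `(x_1,…,x_n)`. -/
noncomputable def moduleDepth (n : ℕ) (K : Type) [Field K] (M : Type)
    [AddCommGroup M] [Module (MvPolynomial (Fin n) K) M] : ℕ :=
  sSup {r | ∃ rs : List (MvPolynomial (Fin n) K), rs.length = r ∧
    (∀ s ∈ rs, s ∈ maxIdeal n K) ∧ RingTheory.Sequence.IsRegular M rs}

/-- The `S`-module `I/J`. -/
abbrev QuotMod (I J : Ideal (MvPolynomial (Fin n) K)) :=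
  ↥I ⧸ (Submodule.comap I.subtype J)

/-! The filtration lists the Stanley spaces `x^{c'} K[Z_{d i}]` in decreasing order of
`(i, |c'|)`, lexicographically. Multiplying a monomial of such a space by `x_j` either keeps it
in the same space (`x_j ∈ Z_{d i}`), or sends it into `J`, or gives a monomial `x^b` of
`I \ J`. In the last case `b` lies in some interval `[c k, d k]` with `i ≤ k`, because the
intervals of index below `i` form a poset ideal that misses `b - e_j ∈ [c i, d i]`; and if
`k = i`, the Stanley space of `b` has corner `c' + e_j`. Either way `x^b` lies in an earlier
space. -/

lemma monomial_one_mem_of_le {σ R : Type*} [CommSemiring R] {I : Ideal (MvPolynomial σ R)}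
    {a b : σ →₀ ℕ} (ha : monomial a (1 : R) ∈ I) (hab : a ≤ b) : monomial b (1 : R) ∈ I :=
  I.mem_of_dvd (monomial_dvd_monomial.2 ⟨Or.inr hab, one_dvd _⟩) ha

lemma X_mul_monomial_one {σ R : Type*} [CommSemiring R] (j : σ) (a : σ →₀ ℕ) :
    (X j : MvPolynomial σ R) * monomial a 1 = monomial (a + Finsupp.single j 1) 1 := by
  rw [monomial_add_single, pow_one, mul_comm]

lemma exists_equiv_fin_antitone {ι α : Type*} [Finite ι] [LinearOrder α] (w : ι → α) :
    ∃ (N : ℕ) (e : Fin N ≃ ι), Antitone (w ∘ e) := by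
  obtain ⟨N, ⟨φ⟩⟩ := Finite.exists_equiv_fin ι
  let f : Fin N → αᵒᵈ := OrderDual.toDual ∘ w ∘ φ.symm
  exact ⟨N, (Tuple.sort f).trans φ.symm, monotone_toDual_comp_iff.1 (Tuple.monotone_sort f)⟩

lemma isSSubmoduleModJ_span_monomial (J : Ideal (MvPolynomial (Fin n) K))
    (T : Set (Fin n →₀ ℕ))
    (hT : ∀ a ∈ T, ∀ j : Fin n,
      a + Finsupp.single j 1 ∈ T ∨ monomial (a + Finsupp.single j 1) (1 : K) ∈ J) :
    IsSSubmoduleModJ J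
      (Submodule.span K ((fun a => (monomial a (1 : K) : MvPolynomial (Fin n) K)) '' T)) := by
  intro j p hp
  induction hp using Submodule.span_induction with
  | mem x hx =>
    obtain ⟨a, ha, rfl⟩ := hx
    rw [X_mul_monomial_one]
    rcases hT a ha j with h | h
    · exact Submodule.mem_sup_left (Submodule.subset_span ⟨_, h, rfl⟩)
    · exact Submodule.mem_sup_right (Submodule.subset_span ⟨_, h, rfl⟩)
  | zero => simp
  | add x y _ _ hx hy => rw [mul_add]; exact add_mem hx hy
  | smul c x _ hx => rw [mul_smul_comm]; exact Submodule.smul_mem _ c hx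

def stanleyExps (c : Fin n →₀ ℕ) (Z : Finset (Fin n)) : Set (Fin n →₀ ℕ) :=
  {a | c ≤ a ∧ ∀ j ∉ Z, a j = c j}

lemma add_single_mem_stanleyExps {c a : Fin n →₀ ℕ} {Z : Finset (Fin n)}
    (ha : a ∈ stanleyExps c Z) {j : Fin n} (hj : j ∈ Z) :
    a + Finsupp.single j 1 ∈ stanleyExps c Z := by
  refine ⟨ha.1.trans le_self_add, fun l hl => ?_⟩
  rw [Finsupp.add_apply, Finsupp.single_eq_of_ne (by rintro rfl; exact hl hj), add_zero]
  exact ha.2 l hl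

lemma iSup_stanleySpace {ι : Type*} (p : ι → Prop) (c : ι → Fin n →₀ ℕ)
    (Z : ι → Finset (Fin n)) :
    ⨆ i, ⨆ _ : p i, stanleySpace K (c i) (Z i) =
      Submodule.span K ((fun a => (monomial a (1 : K) : MvPolynomial (Fin n) K)) ''
        ⋃ i, ⋃ _ : p i, stanleyExps (c i) (Z i)) := by
  simp only [Set.image_iUnion₂, Submodule.span_iUnion₂]
  rfl

namespace IntervalPartition

variable {P : Set (Fin n →₀ ℕ)} (Pt : IntervalPartition P) (g : Fin n →₀ ℕ)

instance : Finite (Pt.DPIdx g) :=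
  have (i : Fin Pt.r) : Finite (Pt.innerSet g i) :=
    ((Set.finite_Icc (Pt.c i) (Pt.d i)).subset fun _ h => h.1).to_subtype
  inferInstanceAs (Finite (Σ i : Fin Pt.r, Pt.innerSet g i))

noncomputable def rank (x : Pt.DPIdx g) : ℕ ×ₗ ℕ :=
  toLex ((x.1 : ℕ), Finsupp.degree (x.2 : Fin n →₀ ℕ))

/-- The corner of the Stanley space of `D(Pt)` inside `[c i, d i]` that contains `b`. -/
noncomputable def innerProj (i : Fin Pt.r) (b : Fin n →₀ ℕ) : Fin n →₀ ℕ :=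
  Finsupp.equivFunOnFinite.symm fun l => if l ∈ Zset g (Pt.d i) then Pt.c i l else b l

variable {Pt g}

lemma innerProj_mem_innerSet {i : Fin Pt.r} {b : Fin n →₀ ℕ}
    (hb : b ∈ Set.Icc (Pt.c i) (Pt.d i)) : Pt.innerProj g i b ∈ Pt.innerSet g i := by
  refine ⟨⟨fun l => ?_, fun l => ?_⟩, fun l hl => by simp [innerProj, hl]⟩ <;>
    by_cases hl : l ∈ Zset g (Pt.d i) <;> simp only [innerProj, hl,
      Finsupp.coe_equivFunOnFinite_symm, if_true, if_false]
  exacts [le_rfl, hb.1 l, Pt.le i l, hb.2 l]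

lemma mem_stanleyExps_innerProj {i : Fin Pt.r} {b : Fin n →₀ ℕ} (hb : Pt.c i ≤ b) :
    b ∈ stanleyExps (Pt.innerProj g i b) (Zset g (Pt.d i)) := by
  refine ⟨fun l => ?_, fun l hl => by simp [innerProj, hl]⟩
  by_cases hl : l ∈ Zset g (Pt.d i) <;> simp [innerProj, hl, hb l]

lemma innerProj_add_single {x : Pt.DPIdx g} {a : Fin n →₀ ℕ}
    (ha : a ∈ stanleyExps x.2 (Zset g (Pt.d x.1))) {j : Fin n} (hj : j ∉ Zset g (Pt.d x.1)) :
    Pt.innerProj g x.1 (a + Finsupp.single j 1) = (x.2 : Fin n →₀ ℕ) + Finsupp.single j 1 := by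
  ext l
  by_cases hl : l ∈ Zset g (Pt.d x.1)
  · have hjl : j ≠ l := by rintro rfl; exact hj hl
    simp [innerProj, hl, Finsupp.single_apply, hjl, x.2.2.2 l hl]
  · simp [innerProj, hl, ha.2 l hl]

lemma mem_Icc_of_mem_stanleyExps {x : Pt.DPIdx g} {a : Fin n →₀ ℕ}
    (ha : a ∈ stanleyExps x.2 (Zset g (Pt.d x.1))) (hag : a ≤ g) :
    a ∈ Set.Icc (Pt.c x.1) (Pt.d x.1) := by
  obtain ⟨⟨hc, hd⟩, -⟩ := x.2.2
  refine ⟨hc.trans ha.1, fun l => ?_⟩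
  by_cases hl : l ∈ Zset g (Pt.d x.1)
  · rw [(Finset.mem_filter.1 hl).2]; exact hag l
  · rw [ha.2 l hl]; exact hd l

lemma InitialsArePosetIdeals.le_of_le (hPt : Pt.InitialsArePosetIdeals) {i k : Fin Pt.r}
    {a b : Fin n →₀ ℕ} (ha : a ∈ Set.Icc (Pt.c i) (Pt.d i)) (hb : b ∈ Set.Icc (Pt.c k) (Pt.d k))
    (hab : a ≤ b) : i ≤ k := by
  by_contra! hki
  obtain ⟨i', hi', ha'⟩ := hPt i b a ⟨k, hki, hb⟩ (Pt.sub i ha) hab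
  exact Set.disjoint_left.1 (Pt.disj i' i (Fin.ne_of_lt hi')) ha' ha

lemma exists_rank_lt_of_add_single {I J : Ideal (MvPolynomial (Fin n) K)}
    {Pt : IntervalPartition (charPoset I J g)} (hPt : Pt.InitialsArePosetIdeals)
    (hg : ∀ a ∈ expSet I J, a ≤ g) {x : Pt.DPIdx g} {a : Fin n →₀ ℕ}
    (ha : a ∈ stanleyExps x.2 (Zset g (Pt.d x.1))) {j : Fin n} (hj : j ∉ Zset g (Pt.d x.1))
    (hJ : monomial (a + Finsupp.single j 1) (1 : K) ∉ J) :
    ∃ y : Pt.DPIdx g, a + Finsupp.single j 1 ∈ stanleyExps y.2 (Zset g (Pt.d y.1)) ∧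
      Pt.rank g x < Pt.rank g y := by
  set b := a + Finsupp.single j 1
  have hab : a ≤ b := le_self_add
  have hcb : Pt.c x.1 ≤ b := x.2.2.1.1.trans (ha.1.trans hab)
  have hbP : b ∈ charPoset I J g :=
    have hbI := monomial_one_mem_of_le (Pt.mem_c x.1).1.1 hcb
    ⟨⟨hbI, hJ⟩, hg b ⟨hbI, hJ⟩⟩
  have haIcc := mem_Icc_of_mem_stanleyExps ha (hab.trans hbP.2)
  obtain ⟨k, hbk⟩ := Pt.cover b hbP
  refine ⟨⟨k, _, innerProj_mem_innerSet hbk⟩, mem_stanleyExps_innerProj hbk.1, ?_⟩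
  rcases (hPt.le_of_le haIcc hbk hab).lt_or_eq with hik | rfl
  · exact Prod.Lex.lt_iff.2 (Or.inl hik)
  · refine Prod.Lex.lt_iff.2 (Or.inr ⟨rfl, ?_⟩)
    show Finsupp.degree (x.2 : Fin n →₀ ℕ) < Finsupp.degree (Pt.innerProj g x.1 b)
    rw [innerProj_add_single ha hj, map_add, Finsupp.degree_single]
    exact Nat.lt_succ_self _

end IntervalPartition

theorem partition_with_poset_ideal_initials_induced_by_prime_filtration_general
    {n : ℕ} {K : Type} [Field K] (I J : Ideal (MvPolynomial (Fin n) K))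
    (g : Fin n →₀ ℕ) (hg : ∀ a ∈ expSet I J, a ≤ g)
    (Pt : IntervalPartition (charPoset I J g))
    (hposet : Pt.InitialsArePosetIdeals) :
    Pt.DPInducedByPrimeFiltration J g := by
  obtain ⟨N, e, he⟩ := exists_equiv_fin_antitone (Pt.rank g)
  refine ⟨N, e, e.bijective, fun t => ?_⟩
  simp only [IntervalPartition.DPfam]
  rw [iSup_stanleySpace]
  refine isSSubmoduleModJ_span_monomial J _ fun a ha j => ?_
  obtain ⟨s, hst, ha⟩ := Set.mem_iUnion₂.1 ha
  by_cases hj : j ∈ Zset g (Pt.d (e s).1)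
  · exact Or.inl (Set.mem_iUnion₂.2 ⟨s, hst, add_single_mem_stanleyExps ha hj⟩)
  by_cases hb : monomial (a + Finsupp.single j 1) (1 : K) ∈ J
  · exact Or.inr hb
  obtain ⟨y, hy, hlt⟩ := IntervalPartition.exists_rank_lt_of_add_single hposet hg ha hj hb
  have hys : e.symm y < s := he.reflect_lt (by simpa using hlt)
  exact Or.inl (Set.mem_iUnion₂.2 ⟨e.symm y, Nat.lt_trans hys hst, by rwa [e.apply_symm_apply]⟩)

/-- **Theorem.** If `Pt : P^g_{I/J} = ⋃ᵢ [cᵢ, dᵢ]` is a partition such that all partial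
unions `⋃_{i<t} [cᵢ, dᵢ]` are poset ideals of `P^g_{I/J}`, then the Stanley decomposition
`D(Pt)` is induced by a prime filtration; equivalently, its Stanley spaces can be ordered
so that every partial sum is a `ℤⁿ`-graded `S`-submodule of `I/J`. -/
theorem partition_with_poset_ideal_initials_induced_by_prime_filtration
    {n : ℕ} {K : Type} [Field K] (I J : Ideal (MvPolynomial (Fin n) K))
    (hI : IsMonomialIdeal I) (hJ : IsMonomialIdeal J) (hJI : J < I)
    (g : Fin n →₀ ℕ) (hg : ∀ a ∈ expSet I J, a ≤ g)
    (Pt : IntervalPartition (charPoset I J g))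
    (hposet : Pt.InitialsArePosetIdeals) :
    Pt.DPInducedByPrimeFiltration J g :=
  partition_with_poset_ideal_initials_induced_by_prime_filtration_general I J g hg Pt hposet

end StanleyPaper
end

section
/- Every finitely generated ℤ^n-graded module M over the polynomial ring S = K[x_1,…,x_n] admits a Stanley decomposition, i.e., a presentation of the ℤ^n-graded K-vector space M as a finite direct sum M = ⊕_{i=1}^m u_iK[Z_i] of Stanley spaces. -/
open MvPolynomial

namespace StanleyPaper

variable (n : ℕ) (K : Type) [Field K]
variable (M : Type) [AddCommGroup M] [Module K M]
  [Module (MvPolynomial (Fin n) K) M] [IsScalarTower K (MvPolynomial (Fin n) K) M]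

/-- A `ℤⁿ`-grading of an `S = K[x_1,…,x_n]`-module `M`: a direct sum decomposition
`M = ⊕_{a ∈ ℤⁿ} M_a` into `K`-subspaces compatible with the multigrading of `S`. -/
structure Multigrading where
  grade : (Fin n → ℤ) → Submodule K M
  internal : DirectSum.IsInternal grade
  smul_mem : ∀ (d : Fin n →₀ ℕ) (a : Fin n → ℤ) (x : M), x ∈ grade a →
    (monomial d (1 : K) : MvPolynomial (Fin n) K) • x ∈ grade (a + fun i => (d i : ℤ))

variable {n K M}

/-- The Stanley space `u K[Z] ⊆ M`: the `K`-subspace generated by all `x^e • u` with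
`e` supported in `Z`. -/
def mStanleySpace (u : M) (Z : Finset (Fin n)) : Submodule K M :=
  Submodule.span K
    ((fun e : Fin n →₀ ℕ => (monomial e (1 : K) : MvPolynomial (Fin n) K) • u) ''
      {e | ∀ j ∉ Z, e j = 0})

/-- A Stanley decomposition of the `ℤⁿ`-graded module `M`: a finite direct sum
decomposition `M = ⊕ u_i K[Z_i]` of the `ℤⁿ`-graded `K`-vector space `M` into Stanley
spaces, each of which is a free `K[Z_i]`-module. -/
structure MStanleyDec (gr : Multigrading n K M) where
  m : ℕ
  u : Fin m → M
  deg : Fin m → (Fin n → ℤ)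
  Z : Fin m → Finset (Fin n)
  homog : ∀ i, u i ∈ gr.grade (deg i)
  free : ∀ i, LinearIndependent K fun e : {e : Fin n →₀ ℕ // ∀ j ∉ Z i, e j = 0} =>
    (monomial (e : Fin n →₀ ℕ) (1 : K) : MvPolynomial (Fin n) K) • u i
  internal : DirectSum.IsInternal fun i => mStanleySpace (K := K) (u i) (Z i)

/-- `sdepth D = min |Z_i|`. -/
noncomputable def MStanleyDec.sdepth {gr : Multigrading n K M} (D : MStanleyDec gr) : ℕ :=
  sInf {k | ∃ i, k = (D.Z i).card}

/-- The Stanley depth of the `ℤⁿ`-graded module `M`. -/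
noncomputable def msdepth (gr : Multigrading n K M) : ℕ :=
  sSup {k | ∃ D : MStanleyDec gr, k = D.sdepth}

/-- An `S`-submodule `N` of `M` is `ℤⁿ`-graded iff every element of `N` is a sum of
homogeneous elements of `N`. -/
def IsGradedSub (gr : Multigrading n K M) (N : Submodule (MvPolynomial (Fin n) K) M) :
    Prop :=
  N.restrictScalars K ≤ ⨆ a : Fin n → ℤ, (N.restrictScalars K ⊓ gr.grade a)

/-- A prime filtration of the `ℤⁿ`-graded module `M`: a chain
`0 = N 0 ⊆ N 1 ⊆ ⋯ ⊆ N m = M` of `ℤⁿ`-graded `S`-submodules such that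
`N (i+1) / N i ≅ (S/P i)(-a_i)`, i.e. `N (i+1) / N i` is generated by the class of a
homogeneous element `u i` of degree `deg i` whose annihilator modulo `N i` is the
monomial prime ideal `P i`. -/
structure MPrimeFiltration (gr : Multigrading n K M) where
  m : ℕ
  N : Fin (m + 1) → Submodule (MvPolynomial (Fin n) K) M
  u : Fin m → M
  deg : Fin m → (Fin n → ℤ)
  P : Fin m → Ideal (MvPolynomial (Fin n) K)
  bot : N 0 = ⊥
  top : N (Fin.last m) = ⊤
  graded : ∀ i, IsGradedSub gr (N i)
  homog : ∀ i, u i ∈ gr.grade (deg i)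
  gen : ∀ i, N i.succ = N i.castSucc ⊔ Submodule.span (MvPolynomial (Fin n) K) {u i}
  ann : ∀ i, ∀ s : MvPolynomial (Fin n) K, s • u i ∈ N i.castSucc ↔ s ∈ P i
  isPrime : ∀ i, IsMonomialPrime (P i)

/-- The support of a prime filtration. -/
def MPrimeFiltration.supp {gr : Multigrading n K M} (F : MPrimeFiltration gr) :
    Set (Ideal (MvPolynomial (Fin n) K)) :=
  Set.range F.P

/-- `fdepth ℱ = min { dim S/P : P ∈ supp ℱ }`. -/
noncomputable def MPrimeFiltration.fdepth {gr : Multigrading n K M}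
    (F : MPrimeFiltration gr) : WithBot ℕ∞ :=
  ⨅ i : Fin F.m, ringKrullDim (MvPolynomial (Fin n) K ⧸ F.P i)

/-!
Descending induction on the graded submodules `N` of the Noetherian module `M`, constructing
Stanley spaces that complement `N`. For `N ≠ M` choose a homogeneous `u ∉ N` whose colon ideal
`N : u` is maximal among those of homogeneous elements outside `N`, and let `Z` be the set of
variables with `x_j u ∉ N`. Maximality forces `N : x_j u = N : u` for `j ∈ Z`, so no monomial in
the variables of `Z` lies in `N : u`; as `N` is graded, no nonzero polynomial in them does either.
Hence `u K[Z]` is a free Stanley space meeting `N` trivially, and since `x_j u ∈ N` for `j ∉ Z`,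
`N + S u = N ⊕ u K[Z]`. The larger submodule `N + S u` is again graded, and at `N = 0` the
complementing Stanley spaces are a Stanley decomposition of `M`.
-/

end StanleyPaper

section Lattice

variable {α : Type*} [CompleteLattice α]

theorem iSup_fin_cons {m : ℕ} (a : α) (f : Fin m → α) :
    ⨆ i, (Fin.cons a f : Fin (m + 1) → α) i = a ⊔ ⨆ i, f i := by
  rw [← Finset.sup_univ_eq_iSup, Fin.univ_succ, Finset.sup_cons, Finset.sup_map]
  simp [Function.comp_def, Finset.sup_univ_eq_iSup]

theorem iSupIndep.fin_cons [IsModularLattice α] {m : ℕ} {a : α} {f : Fin m → α}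
    (hf : iSupIndep f) (ha : Disjoint a (⨆ i, f i)) :
    iSupIndep (Fin.cons a f : Fin (m + 1) → α) := by
  classical
  rw [iSupIndep_iff_supIndep_univ, Fin.univ_succ, Finset.cons_eq_insert]
  refine Finset.SupIndep.insert ?_ ?_
  · rw [Finset.supIndep_map]
    simpa [Function.comp_def] using hf.sup_indep_univ
  · simpa [Finset.sup_map, Function.comp_def, Finset.sup_univ_eq_iSup] using ha

end Lattice

namespace MvPolynomial

variable {σ R : Type*} [CommSemiring R]

theorem monomial_one_notMem_of_forall_X_mul_mem {I : Ideal (MvPolynomial σ R)} (hI : 1 ∉ I)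
    {Z : Set σ} (hZ : ∀ j ∈ Z, ∀ t, X j * t ∈ I → t ∈ I) {e : σ →₀ ℕ}
    (he : ∀ j ∉ Z, e j = 0) : monomial e (1 : R) ∉ I := by
  -- the elements that are non-zero-divisors modulo `I` form a submonoid containing `X j`, `j ∈ Z`
  let T : Submonoid (MvPolynomial σ R) :=
    { carrier := {s | ∀ t, s * t ∈ I → t ∈ I}
      one_mem' := fun t ht => by rwa [one_mul] at ht
      mul_mem' := fun ha hb t ht => hb t (ha _ (by rwa [mul_assoc] at ht)) }
  have hT : monomial e (1 : R) ∈ T := by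
    rw [monomial_eq, C_1, one_mul]
    refine SubmonoidClass.finsuppProd_mem T e _ fun j hj => pow_mem ?_ _
    exact hZ j (by_contra fun h => hj (he j h))
  exact fun h => hI (hT 1 (by rwa [mul_one]))

end MvPolynomial

namespace StanleyPaper

variable {n : ℕ} {K : Type} [Field K] {M : Type} [AddCommGroup M] [Module K M]
  [Module (MvPolynomial (Fin n) K) M]

local notation "S" => MvPolynomial (Fin n) K

open DirectSum

variable {gr : Multigrading n K M} {N N' : Submodule (MvPolynomial (Fin n) K) M}

theorem mStanleySpace_fin_cons {m : ℕ} (u : M) (v : Fin m → M) (Z : Finset (Fin n))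
    (W : Fin m → Finset (Fin n)) :
    (fun i => mStanleySpace (K := K) ((Fin.cons u v : Fin (m + 1) → M) i)
      ((Fin.cons Z W : Fin (m + 1) → Finset (Fin n)) i)) =
      Fin.cons (mStanleySpace u Z) fun i => mStanleySpace (v i) (W i) := by
  ext i : 1
  cases i using Fin.cases <;> rfl

theorem exists_mem_grade_notMem (hN : N ≠ ⊤) : ∃ u a, u ∈ gr.grade a ∧ u ∉ N := by
  by_contra! h
  refine hN (Submodule.eq_top_iff'.mpr fun x => ?_)
  have hx : x ∈ ⨆ a, gr.grade a := by
    rw [gr.internal.submodule_iSup_eq_top]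
    trivial
  induction hx using Submodule.iSup_induction' with
  | mem a y hy => exact h y a hy
  | zero => exact N.zero_mem
  | add y z _ _ hy hz => exact N.add_mem hy hz

theorem exists_mem_grade_colon_saturated (hN : N ≠ ⊤) :
    ∃ u a, u ∈ gr.grade a ∧ u ∉ N ∧ ∀ j, (X j : S) • u ∉ N →
      ∀ t, X j * t ∈ N.colon {u} → t ∈ N.colon {u} := by
  obtain ⟨v, b, hv, hvN⟩ := exists_mem_grade_notMem hN
  obtain ⟨_, ⟨u, a, hu, huN, rfl⟩, hmax⟩ := set_has_maximal_iff_noetherian.mpr inferInstance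
    {I | ∃ u a, u ∈ gr.grade a ∧ u ∉ N ∧ N.colon {u} = I} ⟨_, v, b, hv, hvN, rfl⟩
  refine ⟨u, a, hu, huN, fun j hj t ht => ?_⟩
  have hle : N.colon {u} ≤ N.colon {(X j : S) • u} := fun r hr => by
    rw [Submodule.mem_colon_singleton, smul_comm]
    exact N.smul_mem _ (Submodule.mem_colon_singleton.mp hr)
  have heq := eq_of_le_of_not_lt hle (hmax _ ⟨_, _, gr.smul_mem _ a u hu, hj, rfl⟩)
  rw [heq, Submodule.mem_colon_singleton, smul_smul]
  rwa [Submodule.mem_colon_singleton, mul_comm] at ht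

variable [IsScalarTower K (MvPolynomial (Fin n) K) M]

noncomputable instance Multigrading.decomposition (gr : Multigrading n K M) :
    Decomposition gr.grade :=
  gr.internal.chooseDecomposition

theorem smul_eq_sum_monomial_smul (s : S) (u : M) :
    s • u = ∑ e ∈ s.support, s.coeff e • (monomial e (1 : K) : S) • u := by
  conv_lhs => rw [s.as_sum, Finset.sum_smul]
  refine Finset.sum_congr rfl fun e _ => ?_
  rw [← smul_assoc, smul_monomial, smul_eq_mul, mul_one]

theorem Multigrading.decompose_smul_of_mem (gr : Multigrading n K M) {u : M}
    {a : Fin n → ℤ} (hu : u ∈ gr.grade a) (s : S) (e : Fin n →₀ ℕ) :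
    (decompose gr.grade (s • u) (a + fun i => (e i : ℤ)) : M) =
      s.coeff e • (monomial e (1 : K) : S) • u := by
  classical
  have hdeg : Function.Injective fun e : Fin n →₀ ℕ => a + fun i => (e i : ℤ) :=
    fun e e' h => Finsupp.ext fun i => by simpa using congrFun h i
  rw [smul_eq_sum_monomial_smul, decompose_sum, DirectSum.sum_apply,
    Submodule.coe_sum]
  have hterm : ∀ e' ∈ s.support,
      (decompose gr.grade (s.coeff e' • (monomial e' (1 : K) : S) • u)
        (a + fun i => (e i : ℤ)) : M) = if e' = e then s.coeff e' • (monomial e' 1 : S) • u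
          else 0 := fun e' _ => by
    have hmem := Submodule.smul_mem _ (s.coeff e') (gr.smul_mem e' a u hu)
    split_ifs with h
    · exact decompose_of_mem_same _ (h ▸ hmem)
    · exact decompose_of_mem_ne _ hmem (hdeg.ne h)
  rw [Finset.sum_congr rfl hterm, Finset.sum_ite_eq']
  split_ifs with he
  · rfl
  · rw [notMem_support_iff.mp he, zero_smul]

theorem IsGradedSub.decompose_mem (hN : IsGradedSub gr N) {x : M} (hx : x ∈ N)
    (a : Fin n → ℤ) : (decompose gr.grade x a : M) ∈ N := by
  have hx' := hN hx
  clear hx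
  induction hx' using Submodule.iSup_induction' with
  | mem b y hy =>
    obtain ⟨hyN, hyb⟩ := Submodule.mem_inf.mp hy
    by_cases hab : b = a
    · rwa [← hab, decompose_of_mem_same _ hyb]
    · rw [decompose_of_mem_ne _ hyb hab]
      exact N.zero_mem
  | zero => simp
  | add y z _ _ hy hz =>
    rw [decompose_add, DirectSum.add_apply, Submodule.coe_add]
    exact N.add_mem hy hz

theorem IsGradedSub.monomial_smul_mem (hN : IsGradedSub gr N) {u : M} {a : Fin n → ℤ}
    (hu : u ∈ gr.grade a) {s : S} (hs : s • u ∈ N) {e : Fin n →₀ ℕ} (he : e ∈ s.support) :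
    (monomial e (1 : K) : S) • u ∈ N := by
  have h := hN.decompose_mem hs (a + fun i => (e i : ℤ))
  rw [gr.decompose_smul_of_mem hu] at h
  exact (Submodule.smul_mem_iff (N.restrictScalars K) (mem_support_iff.mp he)).mp h

theorem isGradedSub_span_singleton {u : M} {a : Fin n → ℤ} (hu : u ∈ gr.grade a) :
    IsGradedSub gr (Submodule.span S {u}) := by
  intro x hx
  obtain ⟨s, rfl⟩ := Submodule.mem_span_singleton.mp hx
  rw [smul_eq_sum_monomial_smul]
  refine Submodule.sum_mem _ fun e _ => Submodule.mem_iSup_of_mem (a + fun i => (e i : ℤ)) ?_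
  refine Submodule.smul_mem _ _ (Submodule.mem_inf.mpr ⟨?_, gr.smul_mem e a u hu⟩)
  exact Submodule.smul_mem _ _ (Submodule.mem_span_singleton_self u)

theorem IsGradedSub.sup (hN : IsGradedSub gr N) (hN' : IsGradedSub gr N') :
    IsGradedSub gr (N ⊔ N') := by
  have hmono : ∀ P ≤ N ⊔ N', IsGradedSub gr P → P.restrictScalars K ≤
      ⨆ a, (N ⊔ N').restrictScalars K ⊓ gr.grade a := fun P hP hP' =>
    hP'.trans (iSup_mono fun a => inf_le_inf_right _ hP)
  exact (Submodule.restrictScalars_sup K N N').le.trans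
    (sup_le (hmono N le_sup_left hN) (hmono N' le_sup_right hN'))

section StanleySpace

variable {u : M} {a : Fin n → ℤ} {Z : Finset (Fin n)}

theorem mStanleySpace_eq_map :
    mStanleySpace (K := K) u Z = (restrictSupport K {e | ∀ j ∉ Z, e j = 0}).map
      ((LinearMap.toSpanSingleton S M u).restrictScalars K) := by
  rw [mStanleySpace, restrictSupport_eq_span, Submodule.map_span, Set.image_image]
  rfl

theorem eq_zero_of_smul_mem_of_colon_saturated (hN : IsGradedSub gr N)
    (hu : u ∈ gr.grade a) (huN : u ∉ N)
    (hZ : ∀ j ∈ Z, ∀ t, X j * t ∈ N.colon {u} → t ∈ N.colon {u}) {s : S}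
    (hs : s ∈ restrictSupport K {e | ∀ j ∉ Z, e j = 0}) (hsu : s • u ∈ N) : s = 0 := by
  by_contra hs0
  obtain ⟨e, he⟩ := support_nonempty.mpr hs0
  refine monomial_one_notMem_of_forall_X_mul_mem (I := N.colon {u}) ?_ hZ (hs he) ?_
  · rwa [Submodule.mem_colon_singleton, one_smul]
  · exact Submodule.mem_colon_singleton.mpr (hN.monomial_smul_mem hu hsu he)

theorem disjoint_mStanleySpace (hN : IsGradedSub gr N) (hu : u ∈ gr.grade a) (huN : u ∉ N)
    (hZ : ∀ j ∈ Z, ∀ t, X j * t ∈ N.colon {u} → t ∈ N.colon {u}) :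
    Disjoint (N.restrictScalars K) (mStanleySpace (K := K) u Z) := by
  rw [Submodule.disjoint_def, mStanleySpace_eq_map]
  rintro _ hN' ⟨s, hs, rfl⟩
  simp only [LinearMap.restrictScalars_apply, LinearMap.toSpanSingleton_apply] at hN' ⊢
  rw [eq_zero_of_smul_mem_of_colon_saturated hN hu huN hZ hs hN', zero_smul]

theorem linearIndependent_monomial_smul (hN : IsGradedSub gr N) (hu : u ∈ gr.grade a)
    (huN : u ∉ N) (hZ : ∀ j ∈ Z, ∀ t, X j * t ∈ N.colon {u} → t ∈ N.colon {u}) :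
    LinearIndependent K fun e : {e : Fin n →₀ ℕ // ∀ j ∉ Z, e j = 0} =>
      (monomial (e : Fin n →₀ ℕ) (1 : K) : S) • u := by
  have hmon : LinearIndependent K fun e : {e : Fin n →₀ ℕ // ∀ j ∉ Z, e j = 0} =>
      (monomial (e : Fin n →₀ ℕ) (1 : K) : S) := by
    simpa [Function.comp_def] using
      (basisMonomials (Fin n) K).linearIndependent.comp Subtype.val Subtype.val_injective
  refine hmon.map (f := (LinearMap.toSpanSingleton _ M u).restrictScalars K) ?_
  have hspan : Submodule.span K (Set.range fun e : {e : Fin n →₀ ℕ // ∀ j ∉ Z, e j = 0} =>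
      (monomial (e : Fin n →₀ ℕ) (1 : K) : S)) =
      restrictSupport K {e | ∀ j ∉ Z, e j = 0} := by
    rw [restrictSupport_eq_span]
    congr 1
    ext p
    simp
  rw [hspan, Submodule.disjoint_def]
  intro s hs hsu
  have hsu : s • u = 0 := hsu
  exact eq_zero_of_smul_mem_of_colon_saturated hN hu huN hZ hs (hsu ▸ N.zero_mem)

theorem restrictScalars_sup_span_singleton (hZ : ∀ j ∉ Z, (X j : S) • u ∈ N) :
    (N ⊔ Submodule.span _ {u}).restrictScalars K =
      N.restrictScalars K ⊔ mStanleySpace (K := K) u Z := by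
  rw [Submodule.restrictScalars_sup]
  refine le_antisymm (sup_le le_sup_left fun x hx => ?_) (sup_le_sup_left ?_ _)
  · obtain ⟨s, rfl⟩ := Submodule.mem_span_singleton.mp hx
    rw [smul_eq_sum_monomial_smul]
    refine Submodule.sum_mem _ fun e _ => Submodule.smul_mem _ _ ?_
    by_cases he : ∀ j ∉ Z, e j = 0
    · exact Submodule.mem_sup_right (Submodule.subset_span ⟨e, he, rfl⟩)
    · push Not at he
      obtain ⟨j, hjZ, hj⟩ := he
      obtain ⟨q, hq⟩ := (X_dvd_monomial (r := (1 : K))).mpr (Or.inr hj)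
      refine Submodule.mem_sup_left (?_ : _ ∈ N)
      rw [hq, mul_comm, mul_smul]
      exact N.smul_mem q (hZ j hjZ)
  · rw [mStanleySpace, Submodule.span_le]
    rintro _ ⟨e, _, rfl⟩
    exact Submodule.smul_mem _ _ (Submodule.mem_span_singleton_self u)

end StanleySpace

/-- Stanley spaces complementing `N` in `M`, i.e. a Stanley decomposition of `M ⧸ N`. -/
structure RelStanleyDec (gr : Multigrading n K M) (N : Submodule S M) where
  m : ℕ
  u : Fin m → M
  deg : Fin m → (Fin n → ℤ)
  Z : Fin m → Finset (Fin n)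
  homog : ∀ i, u i ∈ gr.grade (deg i)
  free : ∀ i, LinearIndependent K fun e : {e : Fin n →₀ ℕ // ∀ j ∉ Z i, e j = 0} =>
    (monomial (e : Fin n →₀ ℕ) (1 : K) : S) • u i
  indep : iSupIndep fun i => mStanleySpace (K := K) (u i) (Z i)
  disjoint : Disjoint (N.restrictScalars K) (⨆ i, mStanleySpace (K := K) (u i) (Z i))
  sup_eq_top : N.restrictScalars K ⊔ ⨆ i, mStanleySpace (K := K) (u i) (Z i) = ⊤

namespace RelStanleyDec

def ofTop (gr : Multigrading n K M) : RelStanleyDec gr ⊤ where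
  m := 0
  u := Fin.elim0
  deg := Fin.elim0
  Z := Fin.elim0
  homog := Fin.rec0
  free := Fin.rec0
  indep := iSupIndep_def.mpr Fin.rec0
  disjoint := by simp
  sup_eq_top := by simp

def cons (D : RelStanleyDec gr N') {u : M} {a : Fin n → ℤ} {Z : Finset (Fin n)}
    (hu : u ∈ gr.grade a)
    (hfree : LinearIndependent K fun e : {e : Fin n →₀ ℕ // ∀ j ∉ Z, e j = 0} =>
      (monomial (e : Fin n →₀ ℕ) (1 : K) : S) • u)
    (hdisj : Disjoint (N.restrictScalars K) (mStanleySpace (K := K) u Z))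
    (hsup : N'.restrictScalars K = N.restrictScalars K ⊔ mStanleySpace (K := K) u Z) :
    RelStanleyDec gr N where
  m := D.m + 1
  u := Fin.cons u D.u
  deg := Fin.cons a D.deg
  Z := Fin.cons Z D.Z
  homog := Fin.cases hu D.homog
  free := Fin.cases hfree D.free
  indep := by
    rw [mStanleySpace_fin_cons]
    exact D.indep.fin_cons ((hsup ▸ D.disjoint).mono_left le_sup_right)
  disjoint := by
    rw [mStanleySpace_fin_cons, iSup_fin_cons]
    exact hdisj.disjoint_sup_right_of_disjoint_sup_left (hsup ▸ D.disjoint)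
  sup_eq_top := by
    rw [mStanleySpace_fin_cons, iSup_fin_cons, ← sup_assoc, ← hsup]
    exact D.sup_eq_top

end RelStanleyDec

theorem nonempty_relStanleyDec [IsNoetherian S M] (N : Submodule S M) (hN : IsGradedSub gr N) :
    Nonempty (RelStanleyDec gr N) := by
  induction N using IsNoetherian.induction with
  | hgt N ih =>
  by_cases htop : N = ⊤
  · exact htop ▸ ⟨.ofTop gr⟩
  obtain ⟨u, a, hu, huN, hsat⟩ := exists_mem_grade_colon_saturated (gr := gr) htop
  classical
  let Z := Finset.univ.filter fun j => (X j : S) • u ∉ N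
  have hZ : ∀ j ∈ Z, ∀ t, X j * t ∈ N.colon {u} → t ∈ N.colon {u} :=
    fun j hj => hsat j (Finset.mem_filter.mp hj).2
  have hlt : N < N ⊔ Submodule.span _ {u} :=
    left_lt_sup.mpr fun h => huN (h (Submodule.mem_span_singleton_self u))
  obtain ⟨D⟩ := ih _ hlt (hN.sup (isGradedSub_span_singleton hu))
  exact ⟨D.cons hu (linearIndependent_monomial_smul hN hu huN hZ)
    (disjoint_mStanleySpace hN hu huN hZ)
    (restrictScalars_sup_span_singleton fun j hj => by simpa [Z] using hj)⟩

/-- **Lemma.** Every finitely generated `ℤⁿ`-graded module over `S = K[x_1,…,x_n]`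
admits a Stanley decomposition. -/
theorem exists_stanley_decomposition
    {n : ℕ} {K : Type} [Field K] {M : Type} [AddCommGroup M] [Module K M]
    [Module (MvPolynomial (Fin n) K) M] [IsScalarTower K (MvPolynomial (Fin n) K) M]
    [Module.Finite (MvPolynomial (Fin n) K) M]
    (gr : Multigrading n K M) :
    Nonempty (MStanleyDec gr) := by
  obtain ⟨D⟩ := nonempty_relStanleyDec (gr := gr) ⊥ fun x hx => by
    rw [(Submodule.mem_bot _).mp hx]
    exact zero_mem _
  have hsup := D.sup_eq_top
  rw [Submodule.restrictScalars_bot, bot_sup_eq] at hsup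
  exact ⟨⟨D.m, D.u, D.deg, D.Z, D.homog, D.free,
    (DirectSum.isInternal_submodule_iff_iSupIndep_and_iSup_eq_top _).mpr ⟨D.indep, hsup⟩⟩⟩

end StanleyPaper
end

section
/- Let I ⊂ S = K[x_1,…,x_n] be a monomial ideal with G(I) = {x^{a_1},…,x^{a_m}}, let a = a_1 ∨ ⋯ ∨ a_m, p = min{a_1(n),…,a_m(n)}, q = a(n), and for p ≤ j ≤ q let I_j be the monomial ideal of K[x_1,…,x_{n-1}] determined by I ∩ x_n^j K[x_1,…,x_{n-1}] = x_n^j I_j. Then sdepth I ≥ min{sdepth I_p, sdepth I_{p+1}, …, sdepth I_{q-1}, sdepth I_q + 1}. -/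
open MvPolynomial

namespace StanleyPaper

variable {n : ℕ} {K : Type} [Field K]

variable {N : ℕ} {K : Type} [Field K]

/-- The exponent set of a Stanley space. -/
def SSet (c : Fin N →₀ ℕ) (Z : Finset (Fin N)) : Set (Fin N →₀ ℕ) :=
  {a | c ≤ a ∧ ∀ j ∉ Z, a j = c j}

noncomputable def mrepr (N : ℕ) (K : Type) [Field K] :
    MvPolynomial (Fin N) K ≃ₗ[K] ((Fin N →₀ ℕ) →₀ K) :=
  (basisMonomials (Fin N) K).repr

lemma mrepr_monomial (a : Fin N →₀ ℕ) :
    mrepr N K (monomial a (1 : K)) = Finsupp.single a 1 := by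
  have h : (monomial a (1 : K) : MvPolynomial (Fin N) K) = basisMonomials (Fin N) K a := by
    rw [coe_basisMonomials]
  rw [h]; exact Module.Basis.repr_self _ _

lemma map_mspan (A : Set (Fin N →₀ ℕ)) :
    Submodule.map (mrepr N K).toLinearMap (Submodule.span K
      ((fun a => (monomial a (1 : K) : MvPolynomial (Fin N) K)) '' A)) =
      Finsupp.supported K K A := by
  rw [Submodule.map_span, Finsupp.supported_eq_span_single, ← Set.image_comp]
  congr 1

lemma mono_mem_kspan {A : Set (Fin N →₀ ℕ)} {a : Fin N →₀ ℕ} :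
    (monomial a (1 : K) : MvPolynomial (Fin N) K) ∈
      Submodule.span K ((fun b => (monomial b (1 : K) : MvPolynomial (Fin N) K)) '' A) ↔
    a ∈ A := by
  constructor
  · intro h
    have h2 : mrepr N K (monomial a (1 : K)) ∈ Finsupp.supported K K A := by
      rw [← map_mspan]; exact Submodule.mem_map_of_mem h
    rw [mrepr_monomial] at h2
    have := (Finsupp.mem_supported K _).mp h2
    rw [Finsupp.support_single_ne_zero a one_ne_zero] at this
    simpa using this
  · intro h
    exact Submodule.subset_span ⟨a, h, rfl⟩

lemma mono_mem_ispan {B : Set (Fin N →₀ ℕ)} {a : Fin N →₀ ℕ} :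
    (monomial a (1 : K) : MvPolynomial (Fin N) K) ∈
      Ideal.span ((fun b => (monomial b (1 : K) : MvPolynomial (Fin N) K)) '' B) ↔
    ∃ b ∈ B, b ≤ a := by
  rw [mem_ideal_span_monomial_image]
  classical
  simp [support_monomial]

lemma iSup_kspan {ι : Type*} (A : ι → Set (Fin N →₀ ℕ)) :
    (⨆ i, Submodule.span K ((fun b => (monomial b (1 : K) : MvPolynomial (Fin N) K)) '' A i)) =
      Submodule.span K ((fun b => (monomial b (1 : K) : MvPolynomial (Fin N) K)) '' ⋃ i, A i) := by
  rw [Set.image_iUnion, Submodule.span_iUnion]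

lemma indep_of_disjoint {ι : Type*} (A : ι → Set (Fin N →₀ ℕ))
    (h : Pairwise (Function.onFun Disjoint A)) :
    iSupIndep (fun i => Submodule.span K
      ((fun b => (monomial b (1 : K) : MvPolynomial (Fin N) K)) '' A i)) := by
  rw [iSupIndep_def]
  intro i
  rw [Submodule.disjoint_def]
  intro x hx1 hx2
  have h1 : mrepr N K x ∈ Finsupp.supported K K (A i) := by
    rw [← map_mspan]; exact Submodule.mem_map_of_mem hx1
  have h2 : mrepr N K x ∈ Finsupp.supported K K (⋃ j, ⋃ _ : j ≠ i, A j) := by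
    have hle : (⨆ j, ⨆ _ : j ≠ i, Submodule.span K
        ((fun b => (monomial b (1 : K) : MvPolynomial (Fin N) K)) '' A j)) ≤
        Submodule.span K ((fun b => (monomial b (1 : K) : MvPolynomial (Fin N) K)) ''
          ⋃ j, ⋃ _ : j ≠ i, A j) := by
      apply iSup_le; intro j; apply iSup_le; intro hj
      apply Submodule.span_mono
      apply Set.image_mono
      exact Set.subset_iUnion₂ (s := fun j _ => A j) j hj
    have := hle hx2
    rw [← map_mspan]
    exact Submodule.mem_map_of_mem this
  have hdis : Disjoint (A i) (⋃ j, ⋃ _ : j ≠ i, A j) := by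
    rw [Set.disjoint_iUnion_right]
    intro j
    rw [Set.disjoint_iUnion_right]
    intro hj
    exact h (Ne.symm hj)
  have := Finsupp.disjoint_supported_supported (M := K) (R := K) hdis
  have hz : mrepr N K x = 0 := (Submodule.disjoint_def.mp this) _ h1 h2
  exact (LinearEquiv.map_eq_zero_iff _).mp hz

lemma linIndep_mono (u : Fin N →₀ ℕ) (Z : Finset (Fin N)) :
    LinearIndependent K fun e : {e : Fin N →₀ ℕ // ∀ j ∉ Z, e j = 0} =>
      (monomial (u + (e : Fin N →₀ ℕ)) (1 : K) : MvPolynomial (Fin N) K) := by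
  have h := (basisMonomials (Fin N) K).linearIndependent
  have hinj : Function.Injective
      (fun e : {e : Fin N →₀ ℕ // ∀ j ∉ Z, e j = 0} => u + (e : Fin N →₀ ℕ)) :=
    fun a b hab => Subtype.ext (by simpa using hab)
  have := h.comp _ hinj
  convert this using 1
  · rfl
  · rfl
  · rfl


section Helpers
variable {N : ℕ}

lemma expSet_bot (I : Ideal (MvPolynomial (Fin N) K)) :
    expSet I (⊥ : Ideal (MvPolynomial (Fin N) K)) =
      {a | (monomial a (1 : K) : MvPolynomial (Fin N) K) ∈ I} := by
  ext a
  simp [expSet, Ideal.mem_bot, MvPolynomial.monomial_eq_zero]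

lemma stanleySpace_def (c : Fin N →₀ ℕ) (Z : Finset (Fin N)) :
    stanleySpace K c Z = Submodule.span K
      ((fun a => (monomial a (1 : K) : MvPolynomial (Fin N) K)) '' SSet c Z) := rfl

lemma quotSpace_def (I J : Ideal (MvPolynomial (Fin N) K)) :
    quotSpace I J = Submodule.span K
      ((fun a => (monomial a (1 : K) : MvPolynomial (Fin N) K)) '' expSet I J) := rfl

lemma mem_SSet_iff {c a : Fin N →₀ ℕ} {Z : Finset (Fin N)} :
    a ∈ SSet c Z ↔ c ≤ a ∧ ∀ j ∉ Z, a j = c j := Iff.rfl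

lemma SSet_zset {c g : Fin N →₀ ℕ} (hc : c ≤ g) :
    SSet c (Zset g c) = {a | a ⊓ g = c} := by
  ext a
  simp only [SSet, Set.mem_setOf_eq, Zset, Finset.mem_filter, Finset.mem_univ, true_and]
  constructor
  · rintro ⟨h1, h2⟩
    ext j
    rw [Finsupp.inf_apply]
    by_cases hj : c j = g j
    · have hga : g j ≤ a j := hj ▸ (Finsupp.le_def.mp h1 j)
      rw [inf_eq_right.2 hga]; exact hj.symm
    · have ha : a j = c j := h2 j (by simpa using hj)
      rw [ha, inf_eq_left.2 ((ha ▸ Finsupp.le_def.mp hc j : c j ≤ g j))]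
  · intro h
    have hj : ∀ j, a j ⊓ g j = c j := by
      intro j; rw [← Finsupp.inf_apply, h]
    constructor
    · rw [Finsupp.le_def]
      intro j; exact (hj j).symm.trans_le inf_le_left
    · intro j hjz
      have hne : c j ≠ g j := by simpa using hjz
      rcases le_total (a j) (g j) with hle | hle
      · rw [← hj j, inf_eq_left.2 hle]
      · exact absurd ((hj j).symm.trans (inf_eq_right.2 hle)) hne

lemma sdepth_le (I J : Ideal (MvPolynomial (Fin N) K)) (D : StanleyDec I J) :
    D.sdepth ≤ N := by
  unfold StanleyDec.sdepth
  rcases Nat.eq_zero_or_pos D.m with h | h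
  · have he : {k | ∃ i : Fin D.m, k = (D.Z i).card} = ∅ := by
      ext k; simp only [Set.mem_setOf_eq, Set.mem_empty_iff_false, iff_false]
      rintro ⟨i, -⟩; have := i.2; omega
    rw [he, Nat.sInf_empty]; exact Nat.zero_le N
  · refine le_trans (Nat.sInf_le ⟨⟨0, h⟩, rfl⟩) ?_
    exact le_trans (Finset.card_le_univ _) (le_of_eq (Fintype.card_fin N))

lemma exists_stanleyDec (B : Set (Fin N →₀ ℕ)) (g : Fin N →₀ ℕ)
    (hg : ∀ b ∈ B, ∃ b' ∈ B, b' ≤ b ∧ b' ≤ g)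
    (I : Ideal (MvPolynomial (Fin N) K))
    (hI : I = Ideal.span ((fun b => (monomial b (1 : K) : MvPolynomial (Fin N) K)) '' B)) :
    Nonempty (StanleyDec I (⊥ : Ideal (MvPolynomial (Fin N) K))) := by
  classical
  have hup : ∀ {c a : Fin N →₀ ℕ}, (monomial c (1 : K) : MvPolynomial (Fin N) K) ∈ I →
      c ≤ a → (monomial a (1 : K) : MvPolynomial (Fin N) K) ∈ I := by
    intro c a hc hca
    rw [hI, mono_mem_ispan] at hc ⊢
    obtain ⟨b, hb, hbc⟩ := hc
    exact ⟨b, hb, hbc.trans hca⟩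
  set C : Set (Fin N →₀ ℕ) :=
    {c | c ≤ g ∧ (monomial c (1 : K) : MvPolynomial (Fin N) K) ∈ I} with hC
  have hCfin : C.Finite :=
    (Set.finite_Icc 0 g).subset (fun c hc => ⟨zero_le, hc.1⟩)
  haveI : Fintype ↥C := hCfin.fintype
  let e : Fin (Fintype.card ↥C) ≃ ↥C := (Fintype.equivFin ↥C).symm
  have hSS : ∀ i, SSet ((e i : Fin N →₀ ℕ)) (Zset g (e i)) =
      {a | a ⊓ g = (e i : Fin N →₀ ℕ)} := fun i => SSet_zset (e i).2.1
  refine ⟨⟨Fintype.card ↥C, fun i => (e i : Fin N →₀ ℕ), fun i => Zset g (e i),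
    fun i => linIndep_mono _ _, ?_, ?_⟩⟩
  · have := indep_of_disjoint (K := K)
      (fun i => SSet ((e i : Fin N →₀ ℕ)) (Zset g (e i))) ?_
    · exact this
    · intro i i' hne
      rw [Function.onFun, hSS, hSS]
      rw [Set.disjoint_left]
      intro a ha ha'
      exact hne (e.injective (Subtype.ext ((ha.symm.trans ha' : _))))
  · have hU : (⋃ i, SSet ((e i : Fin N →₀ ℕ)) (Zset g (e i))) =
        expSet I (⊥ : Ideal (MvPolynomial (Fin N) K)) := by
      rw [expSet_bot]
      ext a
      simp only [Set.mem_iUnion, Set.mem_setOf_eq]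
      constructor
      · rintro ⟨i, hi⟩
        exact hup (e i).2.2 hi.1
      · intro ha
        have hcC : a ⊓ g ∈ C := by
          refine ⟨inf_le_right, ?_⟩
          rw [hI, mono_mem_ispan] at ha ⊢
          obtain ⟨b, hb, hba⟩ := ha
          obtain ⟨b', hb', h1, h2⟩ := hg b hb
          exact ⟨b', hb', le_inf (h1.trans hba) h2⟩
        refine ⟨e.symm ⟨a ⊓ g, hcC⟩, ?_⟩
        rw [hSS, Equiv.apply_symm_apply]
        rfl
    rw [quotSpace_def, ← hU]
    exact iSup_kspan _

lemma exists_sdepth_eq (I J : Ideal (MvPolynomial (Fin N) K))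
    (h : Nonempty (StanleyDec I J)) :
    ∃ D : StanleyDec I J, D.sdepth = sdepthQ I J := by
  have hne : {k | ∃ D : StanleyDec I J, k = D.sdepth}.Nonempty :=
    ⟨h.some.sdepth, h.some, rfl⟩
  have hbdd : BddAbove {k | ∃ D : StanleyDec I J, k = D.sdepth} := by
    refine ⟨N, fun k hk => ?_⟩
    obtain ⟨D, rfl⟩ := hk
    exact sdepth_le I J D
  obtain ⟨D, hD⟩ := Nat.sSup_mem hne hbdd
  exact ⟨D, hD.symm⟩

lemma sdepthQ_bddAbove (I J : Ideal (MvPolynomial (Fin N) K)) :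
    BddAbove {k | ∃ D : StanleyDec I J, k = D.sdepth} := by
  refine ⟨N, fun k hk => ?_⟩
  obtain ⟨D, rfl⟩ := hk
  exact sdepth_le I J D

end Helpers

section Slice
variable {n : ℕ}

/-- Embedding of exponent vectors in `n` variables into `n+1` variables. -/
noncomputable def emb (b : Fin n →₀ ℕ) : Fin (n + 1) →₀ ℕ :=
  Finsupp.embDomain Fin.castSuccEmb b

/-- Restriction of an exponent vector in `n+1` variables to the first `n`. -/
noncomputable def res (a : Fin (n + 1) →₀ ℕ) : Fin n →₀ ℕ :=
  Finsupp.equivFunOnFinite.symm (fun k => a k.castSucc)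

@[simp] lemma res_apply (a : Fin (n + 1) →₀ ℕ) (k : Fin n) : res a k = a k.castSucc :=
  Finsupp.equivFunOnFinite_symm_apply_apply _ _

lemma last_not_range : Fin.last n ∉ Set.range (⇑(Fin.castSuccEmb : Fin n ↪ Fin (n + 1))) := by
  rintro ⟨k, hk⟩
  have := congrArg Fin.val hk
  simp [Fin.castSuccEmb_apply, Fin.last] at this
  have hlt := k.2
  omega

@[simp] lemma emb_castSucc (b : Fin n →₀ ℕ) (k : Fin n) : emb b k.castSucc = b k :=
  Finsupp.embDomain_apply_self _ _ _

@[simp] lemma emb_last (b : Fin n →₀ ℕ) : emb b (Fin.last n) = 0 :=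
  Finsupp.embDomain_notin_range _ _ _ last_not_range

lemma US_last (b : Fin n →₀ ℕ) (j : ℕ) :
    (emb b + Finsupp.single (Fin.last n) j) (Fin.last n) = j := by
  simp

lemma US_castSucc (b : Fin n →₀ ℕ) (j : ℕ) (k : Fin n) :
    (emb b + Finsupp.single (Fin.last n) j) k.castSucc = b k := by
  have hne : Fin.last n ≠ k.castSucc := (Fin.castSucc_lt_last k).ne'
  simp [Finsupp.single_apply, hne]

lemma US_le_iff {b : Fin n →₀ ℕ} {j : ℕ} {a : Fin (n + 1) →₀ ℕ} :
    emb b + Finsupp.single (Fin.last n) j ≤ a ↔ b ≤ res a ∧ j ≤ a (Fin.last n) := by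
  rw [Finsupp.le_def, Finsupp.le_def]
  constructor
  · intro h
    refine ⟨fun k => ?_, ?_⟩
    · have := h k.castSucc; rw [US_castSucc] at this; rwa [res_apply]
    · have := h (Fin.last n); rwa [US_last] at this
  · rintro ⟨h1, h2⟩ k
    refine Fin.lastCases ?_ (fun k' => ?_) k
    · rwa [US_last]
    · rw [US_castSucc]; have := h1 k'; rwa [res_apply] at this

lemma le_US_iff {v : Fin (n + 1) →₀ ℕ} {b : Fin n →₀ ℕ} {j : ℕ} :
    v ≤ emb b + Finsupp.single (Fin.last n) j ↔ res v ≤ b ∧ v (Fin.last n) ≤ j := by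
  rw [Finsupp.le_def, Finsupp.le_def]
  constructor
  · intro h
    refine ⟨fun k => ?_, ?_⟩
    · have := h k.castSucc; rw [US_castSucc] at this; rwa [res_apply]
    · have := h (Fin.last n); rwa [US_last] at this
  · rintro ⟨h1, h2⟩ k
    refine Fin.lastCases ?_ (fun k' => ?_) k
    · rwa [US_last]
    · rw [US_castSucc]; have := h1 k'; rwa [res_apply] at this

end Slice

section StanleyLemmas
variable {N : ℕ}

lemma iUnion_SSet_eq {M : ℕ} (uu : Fin M → (Fin N →₀ ℕ)) (ZZ : Fin M → Finset (Fin N))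
    (E : Set (Fin N →₀ ℕ))
    (h : (⨆ i, stanleySpace K (uu i) (ZZ i)) =
      Submodule.span K ((fun a => (monomial a (1 : K) : MvPolynomial (Fin N) K)) '' E)) :
    (⋃ i, SSet (uu i) (ZZ i)) = E := by
  have key : Submodule.span K
      ((fun a => (monomial a (1 : K) : MvPolynomial (Fin N) K)) '' ⋃ i, SSet (uu i) (ZZ i)) =
      Submodule.span K ((fun a => (monomial a (1 : K) : MvPolynomial (Fin N) K)) '' E) := by
    rw [← iSup_kspan]; exact h
  ext b
  constructor
  · intro hb; exact mono_mem_kspan.mp (key ▸ mono_mem_kspan.mpr hb)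
  · intro hb; exact mono_mem_kspan.mp (key.symm ▸ mono_mem_kspan.mpr hb)

lemma SSet_disjoint_of_indep {M : ℕ} (uu : Fin M → (Fin N →₀ ℕ)) (ZZ : Fin M → Finset (Fin N))
    (h : iSupIndep (fun i : Fin M => stanleySpace K (uu i) (ZZ i))) {i i' : Fin M}
    (hne : i ≠ i') : Disjoint (SSet (uu i) (ZZ i)) (SSet (uu i') (ZZ i')) := by
  rw [Set.disjoint_left]
  intro b hb hb'
  have d := h.pairwiseDisjoint hne
  have h1 : (monomial b (1 : K) : MvPolynomial (Fin N) K) ∈ stanleySpace K (uu i) (ZZ i) :=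
    Submodule.subset_span ⟨b, hb, rfl⟩
  have h2 : (monomial b (1 : K) : MvPolynomial (Fin N) K) ∈ stanleySpace K (uu i') (ZZ i') :=
    Submodule.subset_span ⟨b, hb', rfl⟩
  have hz := Submodule.disjoint_def.mp d _ h1 h2
  exact one_ne_zero (MvPolynomial.monomial_eq_zero.mp hz)

end StanleyLemmas

/-- **Proposition (recursion in the last variable).** Let
`I ⊂ K[x_1,…,x_{n+1}]` be a monomial ideal with minimal generators `x^{u 0},…,x^{u (m-1)}`,
`p = min_i (u i)(last)`, `q = max_i (u i)(last)`, and for each `j` let `I_j ⊆ K[x_1,…,x_n]`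
be the monomial ideal with `I ∩ x_{n+1}^j K[x_1,…,x_n] = x_{n+1}^j I_j`. Then
`sdepth I ≥ min {sdepth I_p, …, sdepth I_{q-1}, sdepth I_q + 1}`. -/
theorem sdepth_ge_min_of_slices
    {n : ℕ} {K : Type} [Field K] (m : ℕ) (hm : 0 < m)
    (u : Fin m → (Fin (n + 1) →₀ ℕ)) (hmin : ∀ i j, i ≠ j → ¬ u i ≤ u j)
    (I : Ideal (MvPolynomial (Fin (n + 1)) K))
    (hI : I = Ideal.span
      (Set.range fun i => (monomial (u i) (1 : K) : MvPolynomial (Fin (n + 1)) K)))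
    (p q : ℕ)
    (hp : p = sInf {k | ∃ i, k = u i (Fin.last n)})
    (hq : q = Finset.univ.sup fun i => u i (Fin.last n))
    (Ij : ℕ → Ideal (MvPolynomial (Fin n) K))
    (hIj : ∀ j : ℕ, Ij j = Ideal.span
      ((fun b => (monomial b (1 : K) : MvPolynomial (Fin n) K)) ''
        {b : Fin n →₀ ℕ |
          (monomial (Finsupp.embDomain Fin.castSuccEmb b + Finsupp.single (Fin.last n) j)
            (1 : K) : MvPolynomial (Fin (n + 1)) K) ∈ I})) :
    sInf ({k | ∃ j : ℕ, p ≤ j ∧ j < q ∧ k = sdepthQ (Ij j) (⊥ : Ideal (MvPolynomial (Fin n) K))}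
        ∪ {sdepthQ (Ij q) (⊥ : Ideal (MvPolynomial (Fin n) K)) + 1}) ≤
      sdepthQ I (⊥ : Ideal (MvPolynomial (Fin (n + 1)) K)) := by
  classical
  -- membership characterizations
  have hmemI : ∀ a : Fin (n + 1) →₀ ℕ,
      (monomial a (1 : K) : MvPolynomial (Fin (n + 1)) K) ∈ I ↔ ∃ i, u i ≤ a := by
    intro a
    rw [hI]
    have hr : (Set.range fun i => (monomial (u i) (1 : K) : MvPolynomial (Fin (n + 1)) K)) =
        (fun b => (monomial b (1 : K) : MvPolynomial (Fin (n + 1)) K)) '' Set.range u := by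
      rw [← Set.range_comp]
      rfl
    rw [hr, mono_mem_ispan]
    simp
  set B : ℕ → Set (Fin n →₀ ℕ) := fun j =>
    {b | (monomial (emb b + Finsupp.single (Fin.last n) j) (1 : K) :
      MvPolynomial (Fin (n + 1)) K) ∈ I} with hBdef
  have hIj' : ∀ j : ℕ, Ij j = Ideal.span
      ((fun b => (monomial b (1 : K) : MvPolynomial (Fin n) K)) '' B j) := fun j => hIj j
  have hmemIj : ∀ (j : ℕ) (b : Fin n →₀ ℕ),
      (monomial b (1 : K) : MvPolynomial (Fin n) K) ∈ Ij j ↔ ∃ b' ∈ B j, b' ≤ b := by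
    intro j b; rw [hIj' j, mono_mem_ispan]
  -- order facts
  have hple : ∀ i, p ≤ u i (Fin.last n) := fun i => hp ▸ Nat.sInf_le ⟨i, rfl⟩
  have hqge : ∀ i, u i (Fin.last n) ≤ q := fun i => hq ▸ Finset.le_sup (f := fun i => u i (Fin.last n)) (Finset.mem_univ i)
  have hpq : p ≤ q := le_trans (hple ⟨0, hm⟩) (hqge ⟨0, hm⟩)
  -- bound for slice generators
  set g : Fin n →₀ ℕ := Finset.univ.sup (fun i => res (u i)) with hgdef
  have hgB : ∀ j : ℕ, ∀ b ∈ B j, ∃ b' ∈ B j, b' ≤ b ∧ b' ≤ g := by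
    intro j b hb
    obtain ⟨i, hi⟩ := (hmemI _).mp hb
    obtain ⟨h1, h2⟩ := le_US_iff.mp hi
    refine ⟨res (u i), ?_, h1, Finset.le_sup (f := fun i => res (u i)) (Finset.mem_univ i)⟩
    show (monomial (emb (res (u i)) + Finsupp.single (Fin.last n) j) (1 : K) :
      MvPolynomial (Fin (n + 1)) K) ∈ I
    rw [hmemI]
    exact ⟨i, le_US_iff.mpr ⟨le_refl _, h2⟩⟩
  -- optimal Stanley decompositions of the slices
  have hDopt : ∀ j : ℕ, ∃ D : StanleyDec (Ij j) (⊥ : Ideal (MvPolynomial (Fin n) K)),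
      D.sdepth = sdepthQ (Ij j) (⊥ : Ideal (MvPolynomial (Fin n) K)) := fun j =>
    exists_sdepth_eq _ _ (exists_stanleyDec (B j) g (hgB j) (Ij j) (hIj' j))
  choose D hDs using hDopt
  -- set-level description of each slice decomposition
  have hDcov : ∀ j : ℕ, (⋃ i : Fin (D j).m, SSet ((D j).u i) ((D j).Z i)) =
      {b : Fin n →₀ ℕ | (monomial b (1 : K) : MvPolynomial (Fin n) K) ∈ Ij j} := by
    intro j
    refine iUnion_SSet_eq _ _ _ (((D j).isDecomp.2.2).trans ?_)
    rw [quotSpace_def, expSet_bot]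
  -- the q-slice is nonzero
  have hb0 : ∀ j : ℕ, (∀ i, u i (Fin.last n) ≤ j) →
      (monomial (res (u ⟨0, hm⟩)) (1 : K) : MvPolynomial (Fin n) K) ∈ Ij j := by
    intro j hj
    rw [hmemIj]
    refine ⟨res (u ⟨0, hm⟩), ?_, le_refl _⟩
    show (monomial (emb (res (u ⟨0, hm⟩)) + Finsupp.single (Fin.last n) j) (1 : K) :
      MvPolynomial (Fin (n + 1)) K) ∈ I
    rw [hmemI]
    exact ⟨⟨0, hm⟩, le_US_iff.mpr ⟨le_refl _, hj ⟨0, hm⟩⟩⟩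
  have hDqm : 0 < (D q).m := by
    by_contra hcon
    have hm0 : (D q).m = 0 := Nat.le_zero.mp (Nat.not_lt.mp hcon)
    have h3 := (D q).isDecomp.2.2
    haveI : IsEmpty (Fin (D q).m) := by rw [hm0]; infer_instance
    rw [iSup_of_empty] at h3
    have hmem : (monomial (res (u ⟨0, hm⟩)) (1 : K) : MvPolynomial (Fin n) K) ∈
        quotSpace (Ij q) (⊥ : Ideal (MvPolynomial (Fin n) K)) := by
      rw [quotSpace_def, expSet_bot]
      exact Submodule.subset_span ⟨_, hb0 q hqge, rfl⟩
    rw [← h3] at hmem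
    exact one_ne_zero (MvPolynomial.monomial_eq_zero.mp ((Submodule.mem_bot K).mp hmem))
  -- the combined decomposition
  set ι := (Σ j : ↥(Finset.Icc p q), Fin ((D (j : ℕ)).m)) with hιdef
  haveI : Nonempty ι := ⟨⟨⟨q, Finset.mem_Icc.mpr ⟨hpq, le_refl q⟩⟩, ⟨0, hDqm⟩⟩⟩
  set U : ι → (Fin (n + 1) →₀ ℕ) := fun x =>
    emb ((D (x.1 : ℕ)).u x.2) + Finsupp.single (Fin.last n) (x.1 : ℕ) with hUdef
  set ZZ : ι → Finset (Fin (n + 1)) := fun x =>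
    Finset.map Fin.castSuccEmb ((D (x.1 : ℕ)).Z x.2) ∪
      (if (x.1 : ℕ) = q then {Fin.last n} else ∅) with hZZdef
  have hxq : ∀ x : ι, p ≤ (x.1 : ℕ) ∧ (x.1 : ℕ) ≤ q := fun x => Finset.mem_Icc.mp x.1.2
  -- membership in ZZ
  have hlastZZ : ∀ x : ι, (Fin.last n ∈ ZZ x ↔ (x.1 : ℕ) = q) := by
    intro x
    simp only [hZZdef, Finset.mem_union, Finset.mem_map]
    constructor
    · rintro (⟨k, -, hk⟩ | h)
      · exact absurd ⟨k, hk⟩ last_not_range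
      · split_ifs at h with hc
        · exact hc
        · simp at h
    · intro h; right; rw [if_pos h]; exact Finset.mem_singleton_self _
  have hcsZZ : ∀ (x : ι) (k : Fin n),
      (Fin.castSucc k ∈ ZZ x ↔ k ∈ (D (x.1 : ℕ)).Z x.2) := by
    intro x k
    simp only [hZZdef, Finset.mem_union, Finset.mem_map]
    constructor
    · rintro (⟨k', hk', hkk⟩ | h)
      · have hk : k' = k := by
          have := congrArg Fin.val hkk
          simp [Fin.castSuccEmb_apply] at this
          exact Fin.ext this
        rwa [← hk]
      · exfalso
        split_ifs at h with hc
        · have := congrArg Fin.val (Finset.mem_singleton.mp h)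
          simp [Fin.last] at this
          have := k.2
          omega
        · simp at h
    · intro h; exact Or.inl ⟨k, h, rfl⟩
  -- characterization of the Stanley sets of the combined decomposition
  have hT : ∀ (x : ι) (a : Fin (n + 1) →₀ ℕ),
      a ∈ SSet (U x) (ZZ x) ↔
      (res a ∈ SSet ((D (x.1 : ℕ)).u x.2) ((D (x.1 : ℕ)).Z x.2) ∧
        ((x.1 : ℕ) = q → q ≤ a (Fin.last n)) ∧
        ((x.1 : ℕ) ≠ q → a (Fin.last n) = (x.1 : ℕ))) := by
    intro x a
    constructor
    · rintro ⟨h1, h2⟩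
      obtain ⟨hb, hj⟩ := US_le_iff.mp h1
      refine ⟨⟨hb, fun k hk => ?_⟩, fun hq' => ?_, fun hq' => ?_⟩
      · have hnm : Fin.castSucc k ∉ ZZ x := fun hc => hk ((hcsZZ x k).mp hc)
        have := h2 (Fin.castSucc k) hnm
        rw [res_apply, this]
        exact US_castSucc _ _ _
      · exact hq'.symm.trans_le hj
      · have hnm : Fin.last n ∉ ZZ x := fun hc => hq' ((hlastZZ x).mp hc)
        have := h2 (Fin.last n) hnm
        rw [this]
        exact US_last _ _
    · rintro ⟨⟨hb, hZ⟩, hqc, hnc⟩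
      have hjle : (x.1 : ℕ) ≤ a (Fin.last n) := by
        by_cases hc : (x.1 : ℕ) = q
        · exact hc.trans_le (hqc hc)
        · exact le_of_eq (hnc hc).symm
      refine ⟨US_le_iff.mpr ⟨hb, hjle⟩, ?_⟩
      intro k hk
      induction k using Fin.lastCases with
      | last =>
        rw [US_last]
        exact hnc (fun hc => hk ((hlastZZ x).mpr hc))
      | cast k' =>
        rw [US_castSucc]
        have hk' : k' ∉ (D (x.1 : ℕ)).Z x.2 := fun hc => hk ((hcsZZ x k').mpr hc)
        have := hZ k' hk'
        rwa [res_apply] at this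
  -- covering
  have hTcov : (⋃ x : ι, SSet (U x) (ZZ x)) =
      expSet I (⊥ : Ideal (MvPolynomial (Fin (n + 1)) K)) := by
    rw [expSet_bot]
    ext a
    simp only [Set.mem_iUnion, Set.mem_setOf_eq]
    constructor
    · rintro ⟨x, hx⟩
      rw [hT] at hx
      obtain ⟨h1, h2, h3⟩ := hx
      have hra : res a ∈ {b : Fin n →₀ ℕ |
          (monomial b (1 : K) : MvPolynomial (Fin n) K) ∈ Ij (x.1 : ℕ)} := by
        rw [← hDcov (x.1 : ℕ)]
        exact Set.mem_iUnion.mpr ⟨x.2, h1⟩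
      rw [Set.mem_setOf_eq, hmemIj] at hra
      obtain ⟨b', hb', hble⟩ := hra
      obtain ⟨i, hi⟩ := (hmemI _).mp hb'
      rw [hmemI]
      refine ⟨i, le_trans hi (US_le_iff.mpr ⟨hble, ?_⟩)⟩
      by_cases hc : (x.1 : ℕ) = q
      · exact hc.trans_le (h2 hc)
      · exact le_of_eq (h3 hc).symm
    · intro ha
      obtain ⟨i, hi⟩ := (hmemI a).mp ha
      have hial : u i (Fin.last n) ≤ a (Fin.last n) := Finsupp.le_def.mp hi _
      have hj' : p ≤ a (Fin.last n) := le_trans (hple i) hial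
      have hpj0 : p ≤ min (a (Fin.last n)) q := le_min hj' hpq
      have hj0q : min (a (Fin.last n)) q ≤ q := min_le_right _ _
      have hresle : res (u i) ≤ res a := by
        rw [Finsupp.le_def]
        intro k
        rw [res_apply, res_apply]
        exact Finsupp.le_def.mp hi _
      have hmem : (monomial (res a) (1 : K) : MvPolynomial (Fin n) K) ∈
          Ij (min (a (Fin.last n)) q) := by
        rw [hmemIj]
        refine ⟨res (u i), ?_, hresle⟩
        show (monomial (emb (res (u i)) +
          Finsupp.single (Fin.last n) (min (a (Fin.last n)) q)) (1 : K) :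
          MvPolynomial (Fin (n + 1)) K) ∈ I
        rw [hmemI]
        exact ⟨i, le_US_iff.mpr ⟨le_refl _, le_min hial (hqge i)⟩⟩
      have : res a ∈ ⋃ i2 : Fin (D (min (a (Fin.last n)) q)).m,
          SSet ((D (min (a (Fin.last n)) q)).u i2) ((D (min (a (Fin.last n)) q)).Z i2) := by
        rw [hDcov]; exact hmem
      obtain ⟨i2, hi2⟩ := Set.mem_iUnion.mp this
      refine ⟨⟨⟨min (a (Fin.last n)) q, Finset.mem_Icc.mpr ⟨hpj0, hj0q⟩⟩, i2⟩, ?_⟩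
      rw [hT]
      refine ⟨hi2, fun hc => ?_, fun hc => ?_⟩
      · have hc' : min (a (Fin.last n)) q = q := hc
        omega
      · have hc' : min (a (Fin.last n)) q ≠ q := hc
        show a (Fin.last n) = min (a (Fin.last n)) q
        omega
  -- disjointness
  have hTdisj : Pairwise (Function.onFun Disjoint (fun x : ι => SSet (U x) (ZZ x))) := by
    rintro ⟨j1, i1⟩ ⟨j2, i2⟩ hne
    rw [Function.onFun, Set.disjoint_left]
    intro a hx hy
    rw [hT] at hx hy
    by_cases hj : j1 = j2
    · subst hj
      have hii : i1 ≠ i2 := fun h => hne (by rw [h])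
      have hd := SSet_disjoint_of_indep (K := K) _ _ ((D (j1 : ℕ)).isDecomp.2.1) hii
      exact Set.disjoint_left.mp hd hx.1 hy.1
    · have hjv : (j1 : ℕ) ≠ (j2 : ℕ) := fun h => hj (Subtype.ext h)
      have h1 : (j1 : ℕ) = q → q ≤ a (Fin.last n) := hx.2.1
      have h1' : (j1 : ℕ) ≠ q → a (Fin.last n) = (j1 : ℕ) := hx.2.2
      have h2 : (j2 : ℕ) = q → q ≤ a (Fin.last n) := hy.2.1
      have h2' : (j2 : ℕ) ≠ q → a (Fin.last n) = (j2 : ℕ) := hy.2.2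
      have hq1 : (j1 : ℕ) ≤ q := (hxq ⟨j1, i1⟩).2
      have hq2 : (j2 : ℕ) ≤ q := (hxq ⟨j2, i2⟩).2
      by_cases hc1 : (j1 : ℕ) = q <;> by_cases hc2 : (j2 : ℕ) = q
      · exact hjv (hc1.trans hc2.symm)
      · have := h1 hc1; have := h2' hc2; omega
      · have := h1' hc1; have := h2 hc2; omega
      · have := h1' hc1; have := h2' hc2; omega
  -- build the Stanley decomposition of I
  let e : Fin (Fintype.card ι) ≃ ι := (Fintype.equivFin ι).symm
  have hDec : IsStanleyDecompOf I (⊥ : Ideal (MvPolynomial (Fin (n + 1)) K))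
      (fun s => U (e s)) (fun s => ZZ (e s)) := by
    refine ⟨fun s => linIndep_mono _ _, ?_, ?_⟩
    · exact indep_of_disjoint (K := K) (fun s => SSet (U (e s)) (ZZ (e s)))
        (fun s s' hne => hTdisj (fun h => hne (e.injective h)))
    · rw [e.surjective.iSup_comp (g := fun x => stanleySpace K (U x) (ZZ x))]
      rw [quotSpace_def, ← hTcov]
      exact iSup_kspan _
  set Dec : StanleyDec I (⊥ : Ideal (MvPolynomial (Fin (n + 1)) K)) :=
    ⟨Fintype.card ι, fun s => U (e s), fun s => ZZ (e s), hDec⟩ with hDecdef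
  -- the sdepth bound
  set c := sInf ({k | ∃ j : ℕ, p ≤ j ∧ j < q ∧
      k = sdepthQ (Ij j) (⊥ : Ideal (MvPolynomial (Fin n) K))}
    ∪ {sdepthQ (Ij q) (⊥ : Ideal (MvPolynomial (Fin n) K)) + 1}) with hcdef
  have hcard : ∀ s : Fin (Fintype.card ι), c ≤ (ZZ (e s)).card := by
    intro s
    set x := e s with hxdef
    have hsd : (D (x.1 : ℕ)).sdepth ≤ ((D (x.1 : ℕ)).Z x.2).card :=
      Nat.sInf_le ⟨x.2, rfl⟩
    have hmap : (Finset.map Fin.castSuccEmb ((D (x.1 : ℕ)).Z x.2)).card =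
        ((D (x.1 : ℕ)).Z x.2).card := Finset.card_map _
    by_cases hc : (x.1 : ℕ) = q
    · have hcards : (ZZ x).card = ((D (x.1 : ℕ)).Z x.2).card + 1 := by
        simp only [hZZdef, if_pos hc]
        rw [Finset.card_union_of_disjoint, hmap, Finset.card_singleton]
        rw [Finset.disjoint_singleton_right]
        intro hmem
        obtain ⟨k, -, hk⟩ := Finset.mem_map.mp hmem
        exact last_not_range ⟨k, hk⟩
      have hc1 : c ≤ sdepthQ (Ij q) (⊥ : Ideal (MvPolynomial (Fin n) K)) + 1 :=
        Nat.sInf_le (Set.mem_union_right _ rfl)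
      rw [hcards]
      calc c ≤ sdepthQ (Ij q) (⊥ : Ideal (MvPolynomial (Fin n) K)) + 1 := hc1
        _ = sdepthQ (Ij (x.1 : ℕ)) (⊥ : Ideal (MvPolynomial (Fin n) K)) + 1 := by rw [hc]
        _ = (D (x.1 : ℕ)).sdepth + 1 := by rw [hDs]
        _ ≤ ((D (x.1 : ℕ)).Z x.2).card + 1 := by omega
    · have hcards : (ZZ x).card = ((D (x.1 : ℕ)).Z x.2).card := by
        simp only [hZZdef, if_neg hc]
        rw [Finset.union_empty, hmap]
      have hc1 : c ≤ sdepthQ (Ij (x.1 : ℕ)) (⊥ : Ideal (MvPolynomial (Fin n) K)) :=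
        Nat.sInf_le (Set.mem_union_left _
          ⟨(x.1 : ℕ), (hxq x).1, lt_of_le_of_ne (hxq x).2 hc, rfl⟩)
      rw [hcards]
      calc c ≤ sdepthQ (Ij (x.1 : ℕ)) (⊥ : Ideal (MvPolynomial (Fin n) K)) := hc1
        _ = (D (x.1 : ℕ)).sdepth := by rw [hDs]
        _ ≤ ((D (x.1 : ℕ)).Z x.2).card := hsd
  have hDecsd : c ≤ Dec.sdepth := by
    have hrfl : Dec.sdepth = sInf {k | ∃ s, k = (Dec.Z s).card} := rfl
    rw [hrfl]
    have hs0 : 0 < Fintype.card ι := Fintype.card_pos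
    refine le_csInf ⟨(Dec.Z ⟨0, hs0⟩).card, ⟨0, hs0⟩, rfl⟩ ?_
    rintro k ⟨s, rfl⟩
    exact hcard s
  calc c ≤ Dec.sdepth := hDecsd
    _ ≤ sdepthQ I (⊥ : Ideal (MvPolynomial (Fin (n + 1)) K)) :=
      le_csSup (sdepthQ_bddAbove I _) ⟨Dec, rfl⟩


end StanleyPaper
end
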